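/- Let 1 < p ≤ 2 and q = p/(p−1). For all vectors α, β in a real inner product space (in particular in any Euclidean space ℝ^k), one has ‖α + β‖^q + ‖α − β‖^q ≤ 2(‖α‖^p + ‖β‖^p)^{q−1}, where ‖·‖ is the norm induced by the inner product. -/

import Mathlib

/-!
The parallelogram law gives `‖α + β‖² + ‖α - β‖² = (‖α‖ + ‖β‖)² + (‖α‖ - ‖β‖)²`, where
`‖α + β‖²` lies between the two squares on the right; so convexity of `s ↦ s ^ (q / 2)` reduces
the claim to Clarkson's scalar inequality, by homogeneity
`(1 + x) ^ q + (1 - x) ^ q ≤ 2 (1 + x ^ p) ^ (q - 1)` for `x ∈ [0, 1]`.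

Write `q = r + 1`, so `p = (r + 1) / r`. The gap between the two sides vanishes at `x = 0`
and `x = 1`; at an interior critical point the vanishing derivative turns it into
`2 (1 + x ^ p) ^ (r - 1) - (1 + x) ^ r - (1 - x) ^ r`. Its nonnegativity is the scalar
inequality at exponent `r`, weakened by lowering `x`'s exponent to `p`: for `r ≤ 2` it follows
from Jensen's inequality for the concave `s ↦ s ^ (r - 1)`, and for `r > 2` from the case
`q = r`, so induction on `⌈q⌉` finishes.
-/

open Real Set

lemma rpow_add_rpow_le_of_mem_Icc {e m M u v : ℝ} (he : 1 ≤ e) (hm : 0 ≤ m)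
    (hu : u ∈ Icc m M) (huv : u + v = m + M) : u ^ e + v ^ e ≤ m ^ e + M ^ e := by
  have hmM : m ≤ M := hu.1.trans hu.2
  set g : ℝ → ℝ := fun s => s ^ e + (m + M - s) ^ e
  have hg : ConvexOn ℝ (Icc m M) g := by
    have h1 := (convexOn_rpow he).subset (fun s hs => hm.trans hs.1) (convex_Icc m M)
    have h2 := ((convexOn_rpow he).comp_affineMap
      (AffineMap.const ℝ ℝ (m + M) - AffineMap.id ℝ ℝ)).subset
      (fun s (hs : s ∈ Icc m M) => show 0 ≤ m + M - s by linarith [hs.2]) (convex_Icc m M)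
    exact h1.add h2
  have := hg.le_max_of_mem_Icc (left_mem_Icc.2 hmM) (right_mem_Icc.2 hmM) hu
  obtain rfl : v = m + M - u := by linarith
  simpa only [g, add_sub_cancel_left, add_sub_cancel_right, add_comm (M ^ e), max_self] using this

lemma nonneg_on_Icc_of_nonneg_at_critical_points {f f' : ℝ → ℝ} {a b : ℝ}
    (hf : ContinuousOn f (Icc a b))
    (hf' : ∀ x ∈ Ioo a b, HasDerivAt f (f' x) x) (ha : 0 ≤ f a) (hb : 0 ≤ f b)
    (hcrit : ∀ x ∈ Ioo a b, f' x = 0 → 0 ≤ f x) : ∀ x ∈ Icc a b, 0 ≤ f x := by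
  intro x hx
  obtain ⟨z, hz, hmin⟩ := isCompact_Icc.exists_isMinOn ⟨x, hx⟩ hf
  refine le_trans ?_ (hmin hx)
  rcases hz.1.eq_or_lt with rfl | hza
  · exact ha
  rcases hz.2.eq_or_lt with rfl | hzb
  · exact hb
  have hzI : z ∈ Ioo a b := ⟨hza, hzb⟩
  exact hcrit z hzI ((hmin.isLocalMin (Icc_mem_nhds hza hzb)).hasDerivAt_eq_zero (hf' z hzI))

def ClarksonScalarIneq (q p : ℝ) : Prop :=
  ∀ x ∈ Icc (0 : ℝ) 1, (1 + x) ^ q + (1 - x) ^ q ≤ 2 * (1 + x ^ p) ^ (q - 1)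

lemma ClarksonScalarIneq.of_le {q p p' : ℝ} (h : ClarksonScalarIneq q p) (hq : 1 ≤ q)
    (hp' : 0 ≤ p') (hp'p : p' ≤ p) : ClarksonScalarIneq q p' := fun x ⟨hx0, hx1⟩ =>
  (h x ⟨hx0, hx1⟩).trans <| mul_le_mul_of_nonneg_left (rpow_le_rpow (by positivity)
    (add_le_add_right (rpow_le_rpow_of_exponent_ge' hx0 hx1 hp' hp'p) 1) (by linarith))
    zero_le_two

lemma clarksonScalarIneq_two {r : ℝ} (hr1 : 1 ≤ r) (hr2 : r ≤ 2) :
    ClarksonScalarIneq r 2 := by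
  rintro x ⟨hx0, hx1⟩
  have hpow : ∀ s : ℝ, 0 ≤ s → s ^ r = s * s ^ (r - 1) := fun s hs => by
    rw [mul_comm, ← rpow_add_one' hs (by linarith), sub_add_cancel]
  have hjensen := (concaveOn_rpow (p := r - 1) (by linarith) (by linarith)).2
    (mem_Ici.2 (by linarith : (0 : ℝ) ≤ 1 + x)) (mem_Ici.2 (by linarith : (0 : ℝ) ≤ 1 - x))
    (by linarith : (0 : ℝ) ≤ (1 + x) / 2) (by linarith : (0 : ℝ) ≤ (1 - x) / 2) (by ring)
  have hmean : (1 + x) / 2 * (1 + x) + (1 - x) / 2 * (1 - x) = 1 + x ^ (2 : ℝ) := by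
    rw [rpow_two]; ring
  simp only [smul_eq_mul, hmean] at hjensen
  rw [hpow _ (by linarith), hpow _ (by linarith)]
  linarith

noncomputable def clarksonGap (r c y : ℝ) : ℝ :=
  2 * (1 + y ^ c) ^ r - (1 + y) ^ (r + 1) - (1 - y) ^ (r + 1)

lemma hasDerivAt_clarksonGap {r c x : ℝ} (hr : 0 ≤ r) (hc : 1 ≤ c) (hx : 0 ≤ x) :
    HasDerivAt (clarksonGap r c)
      (2 * r * c * x ^ (c - 1) * (1 + x ^ c) ^ (r - 1) - (r + 1) * ((1 + x) ^ r - (1 - x) ^ r))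
      x := by
  have hpos : 0 < 1 + x ^ c := by positivity
  have h1 := (((hasDerivAt_rpow_const (Or.inr hc)).const_add 1).rpow_const
    (p := r) (Or.inl hpos.ne')).const_mul 2
  have h2 := ((hasDerivAt_id' x).const_add 1).rpow_const (p := r + 1) (Or.inr (by linarith))
  have h3 := ((hasDerivAt_id' x).const_sub 1).rpow_const (p := r + 1) (Or.inr (by linarith))
  refine ((h1.sub h2).sub h3).congr_deriv ?_
  simp only [add_sub_cancel_right]
  ring

lemma clarksonGap_eq_of_critical {r c z : ℝ} (hr : r + 1 ≠ 0) (hrc : r * c = r + 1)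
    (hz : z ∈ Ioo (0 : ℝ) 1)
    (hcrit : 2 * r * c * z ^ (c - 1) * (1 + z ^ c) ^ (r - 1)
      - (r + 1) * ((1 + z) ^ r - (1 - z) ^ r) = 0) :
    clarksonGap r c z = 2 * (1 + z ^ c) ^ (r - 1) - ((1 + z) ^ r + (1 - z) ^ r) := by
  obtain ⟨hz0, hz1⟩ := hz
  set A := (1 + z ^ c) ^ (r - 1)
  set a := (1 + z) ^ r
  set b := (1 - z) ^ r
  set w := z ^ (c - 1)
  have hab : a - b = 2 * w * A := by
    rw [mul_assoc 2 r, hrc] at hcrit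
    have : (r + 1) * (2 * w * A - (a - b)) = 0 := by linear_combination hcrit
    linarith [(mul_eq_zero.1 this).resolve_left hr]
  have e1 : (1 + z) ^ (r + 1) = a * (1 + z) := rpow_add_one (by linarith) r
  have e2 : (1 - z) ^ (r + 1) = b * (1 - z) := rpow_add_one (by linarith) r
  have e3 : (1 + z ^ c) ^ r = A * (1 + z ^ c) := by
    rw [← rpow_add_one (by positivity) (r - 1), sub_add_cancel]
  have e4 : z ^ c = w * z := by rw [← rpow_add_one hz0.ne' (c - 1), sub_add_cancel]
  rw [clarksonGap, e1, e2, e3, e4]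
  linear_combination (-z) * hab

lemma ClarksonScalarIneq.add_one {r : ℝ} (hr : 1 ≤ r) (h : ClarksonScalarIneq r ((r + 1) / r)) :
    ClarksonScalarIneq (r + 1) ((r + 1) / r) := by
  set c := (r + 1) / r with hc
  have hc1 : 1 ≤ c := by rw [hc, le_div_iff₀ (by linarith)]; linarith
  have hrc : r * c = r + 1 := by rw [hc]; field_simp
  have hderiv : ∀ x ∈ Icc (0 : ℝ) 1, HasDerivAt (clarksonGap r c)
      (2 * r * c * x ^ (c - 1) * (1 + x ^ c) ^ (r - 1) - (r + 1) * ((1 + x) ^ r - (1 - x) ^ r))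
      x := fun x hx => hasDerivAt_clarksonGap (by linarith) hc1 hx.1
  have hgap0 : clarksonGap r c 0 = 0 := by
    norm_num [clarksonGap, zero_rpow (by positivity : c ≠ 0)]
  have hgap1 : clarksonGap r c 1 = 0 := by
    simp only [clarksonGap, one_rpow, sub_self, zero_rpow (by positivity : r + 1 ≠ 0), sub_zero,
      one_add_one_eq_two, rpow_add_one two_ne_zero]
    ring
  have hgap := nonneg_on_Icc_of_nonneg_at_critical_points
    (fun x hx => (hderiv x hx).continuousAt.continuousWithinAt)
    (fun x hx => hderiv x (Ioo_subset_Icc_self hx)) hgap0.ge hgap1.ge fun z hz hcrit => by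
      rw [clarksonGap_eq_of_critical (by positivity) hrc hz hcrit]
      linarith [h z (Ioo_subset_Icc_self hz)]
  intro x hx
  have := hgap x hx
  rw [clarksonGap] at this
  rw [add_sub_cancel_right]
  linarith

lemma clarksonScalarIneq_add_one_div {r : ℝ} (hr : 1 ≤ r) :
    ClarksonScalarIneq (r + 1) ((r + 1) / r) := by
  obtain ⟨n, hn⟩ := exists_nat_ge r
  induction n generalizing r with
  | zero => norm_num at hn; linarith
  | succ n ih =>
    refine ClarksonScalarIneq.add_one hr ?_
    rcases le_or_gt r 2 with hr2 | hr2
    · exact (clarksonScalarIneq_two hr hr2).of_le hr (by positivity)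
        (by rw [div_le_iff₀ (by linarith)]; linarith)
    · have := ih (r := r - 1) (by linarith) (by push_cast at hn; linarith)
      rw [sub_add_cancel] at this
      exact this.of_le hr (by positivity) <| by
        rw [div_le_div_iff₀ (by linarith) (by linarith)]; nlinarith

lemma clarksonScalarIneq_of_holderConjugate {p q : ℝ} (hpq : p.HolderConjugate q) (hq : 2 ≤ q) :
    ClarksonScalarIneq q p := by
  have := clarksonScalarIneq_add_one_div (r := q - 1) (by linarith)
  rwa [sub_add_cancel, ← hpq.symm.conjugate_eq] at this

lemma ClarksonScalarIneq.add_rpow_add_abs_sub_rpow_le {q p : ℝ} (h : ClarksonScalarIneq q p)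
    (hq : q ≠ 0) (hpq : (q - 1) * p = q) {x y : ℝ} (hx : 0 ≤ x) (hy : 0 ≤ y) :
    (x + y) ^ q + |x - y| ^ q ≤ 2 * (x ^ p + y ^ p) ^ (q - 1) := by
  wlog hyx : y ≤ x generalizing x y
  · simpa only [add_comm, abs_sub_comm] using this hy hx (by linarith)
  rw [abs_of_nonneg (by linarith)]
  rcases hx.eq_or_lt with rfl | hx
  · obtain rfl : y = 0 := le_antisymm hyx hy
    simp only [add_zero, sub_zero, zero_rpow hq]
    positivity
  set t := y / x
  have hy : y = x * t := by simp only [t, mul_div_cancel₀ y hx.ne']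
  have ht : t ∈ Icc (0 : ℝ) 1 := ⟨by positivity, div_le_one_of_le₀ hyx hx.le⟩
  have hscale : x ^ q = (x ^ p) ^ (q - 1) := by rw [← rpow_mul hx.le, mul_comm, hpq]
  calc (x + y) ^ q + (x - y) ^ q = x ^ q * ((1 + t) ^ q + (1 - t) ^ q) := by
        rw [mul_add, ← mul_rpow hx.le (by linarith [ht.1]), ← mul_rpow hx.le (by linarith [ht.2]),
          hy, mul_one_add, mul_one_sub]
    _ ≤ x ^ q * (2 * (1 + t ^ p) ^ (q - 1)) := by gcongr; exact h t ht
    _ = 2 * (x ^ p + y ^ p) ^ (q - 1) := by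
        rw [hscale, hy, mul_rpow hx.le ht.1, ← mul_one_add,
          mul_rpow (by positivity) (by positivity)]
        ring

theorem norm_add_rpow_add_norm_sub_rpow_le {V : Type*} [NormedAddCommGroup V]
    [InnerProductSpace ℝ V] {q : ℝ} (hq : 2 ≤ q) (α β : V) :
    ‖α + β‖ ^ q + ‖α - β‖ ^ q ≤ (‖α‖ + ‖β‖) ^ q + |‖α‖ - ‖β‖| ^ q := by
  have hsq : ∀ t : ℝ, 0 ≤ t → (t ^ 2) ^ (q / 2) = t ^ q := fun t ht => by
    rw [← rpow_natCast_mul ht]; congr 1; push_cast; ring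
  have hlow : |‖α‖ - ‖β‖| ≤ ‖α + β‖ := by
    simpa only [norm_neg, sub_neg_eq_add] using abs_norm_sub_norm_le α (-β)
  have := rpow_add_rpow_le_of_mem_Icc (e := q / 2) (by linarith) (sq_nonneg _)
    ⟨pow_le_pow_left₀ (abs_nonneg _) hlow 2, pow_le_pow_left₀ (norm_nonneg _) (norm_add_le α β) 2⟩
    (v := ‖α - β‖ ^ 2) (by rw [parallelogram_law_with_norm ℝ α β, sq_abs]; ring)
  rwa [hsq _ (norm_nonneg _), hsq _ (norm_nonneg _), hsq _ (abs_nonneg _),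
    hsq _ (by positivity), add_comm (|_| ^ q)] at this

theorem inner_product_clarkson {V : Type*} [NormedAddCommGroup V] [InnerProductSpace ℝ V]
    (p q : ℝ) (hp1 : 1 < p) (hp2 : p ≤ 2) (hq : q = p / (p - 1)) (α β : V) :
    ‖α + β‖ ^ q + ‖α - β‖ ^ q ≤ 2 * (‖α‖ ^ p + ‖β‖ ^ p) ^ (q - 1) := by
  have hpq : p.HolderConjugate q := (Real.holderConjugate_iff_eq_conjExponent hp1).2 hq
  have hq2 : 2 ≤ q := by rw [hq, le_div_iff₀ hpq.sub_one_pos]; linarith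
  calc ‖α + β‖ ^ q + ‖α - β‖ ^ q ≤ (‖α‖ + ‖β‖) ^ q + |‖α‖ - ‖β‖| ^ q :=
        norm_add_rpow_add_norm_sub_rpow_le hq2 α β
    _ ≤ 2 * (‖α‖ ^ p + ‖β‖ ^ p) ^ (q - 1) :=
        (clarksonScalarIneq_of_holderConjugate hpq hq2).add_rpow_add_abs_sub_rpow_le
          hpq.symm.ne_zero hpq.symm.sub_one_mul_conj (norm_nonneg α) (norm_nonneg β)
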